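/- For all n ≥ 0, s ≥ 0 and integers r, k, A_n^{(r,k)}(x) = Σ_{m=0}^n [ (-1)^m Σ_{l=0}^{n-m} C(n,l) · S₁(n-l, m) · A_l^{(r+s,k)}(s) ] · B_m^{(s)}(x), where B_m^{(s)}(x) is the Bernoulli polynomial of order s. -/

import Mathlib

/-!
Substituting `t ↦ -log (1 + t)` turns `e^{xt}` into `(1 + t)^{-x}`: coefficientwise this is the
expansion of the falling factorial in Stirling numbers of the first kind, because
`(-log (1 + t))^m / m!` has `t^n`-coefficient `(-1)^m S₁(n, m) / n!`. The same substitution turns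
`t / (e^t - 1)` into `(1 + t) log (1 + t) / t`, so it sends the generating function of
`B^{(s)}_m(x)` to `((1 + t) log (1 + t) / t)^s (1 + t)^{-x}`. The generating function of
`A^{(r,k)}_n(x)` is this series times `(t / log (1 + t))^{r+s} Lif_k(log (1 + t)) (1 + t)^{-s}`,
which is the generating function of `A^{(r+s,k)}_l(s)`; comparing the coefficients of `t^n` gives
the identity.
-/

open scoped Nat

theorem coeff_descPochhammer_succ_succ {R : Type*} [CommRing R] (n m : ℕ) :
    (descPochhammer R (n + 1)).coeff (m + 1) =
      (descPochhammer R n).coeff m - n * (descPochhammer R n).coeff (m + 1) := by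
  rw [descPochhammer_succ_right, ← Polynomial.C_eq_natCast, Polynomial.coeff_mul_X_sub_C,
    mul_comm]

theorem aeval_neg_descPochhammer {A : Type*} [CommRing A] [Algebra ℚ A] (y : A) (n : ℕ) :
    Polynomial.aeval (-y) (descPochhammer ℚ n) =
      (-1) ^ n * Polynomial.aeval y (ascPochhammer ℚ n) := by
  rw [Polynomial.aeval_def, Polynomial.aeval_def, Polynomial.eval₂_eq_eval_map,
    Polynomial.eval₂_eq_eval_map, descPochhammer_map, ascPochhammer_map,
    ← neg_neg y, ascPochhammer_eval_neg_eq_descPochhammer, neg_neg, ← mul_assoc, ← pow_add,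
    Even.neg_one_pow ⟨n, rfl⟩, one_mul]

namespace PowerSeries

open Finset

theorem mk_neg_one_pow_mul_one_add_X (R : Type*) [CommRing R] :
    mk (fun n => (-1 : R) ^ n) * (1 + X) = 1 := by
  ext (_ | n)
  · simp
  · simp [mul_add, coeff_succ_mul_X, pow_succ, coeff_one]

theorem map_evalRingHom_map_C {R : Type*} [CommRing R] (x : R) (f : R⟦X⟧) :
    map (Polynomial.evalRingHom x) (map Polynomial.C f) = f := by
  ext
  simp

variable {A : Type*} [CommRing A] [Algebra ℚ A]

theorem one_add_X_mul_derivative_log : (1 + X) * d⁄dX A (log A) = 1 := by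
  rw [deriv_log, mul_comm]
  simpa using mk_neg_one_pow_mul_one_add_X A

theorem coeff_log_pow_succ_recurrence (m n : ℕ) :
    (n + 1) * coeff (n + 1) (log A ^ (m + 1)) + n * coeff n (log A ^ (m + 1)) =
      (m + 1) * coeff n (log A ^ m) := by
  have hderiv : (1 + X) * d⁄dX A (log A ^ (m + 1)) = C (m + 1 : A) * log A ^ m := by
    rw [Derivation.leibniz_pow, Nat.add_sub_cancel, smul_eq_mul, nsmul_eq_mul,
      mul_left_comm, mul_left_comm (1 + X), one_add_X_mul_derivative_log]
    simp
  have hcoeff := congrArg (coeff n) hderiv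
  rw [add_mul, one_mul, map_add, coeff_derivative, coeff_C_mul] at hcoeff
  rcases n with _ | n
  · simpa [mul_comm] using hcoeff
  · rw [coeff_succ_X_mul, coeff_derivative] at hcoeff
    push_cast at hcoeff ⊢
    linear_combination hcoeff

theorem coeff_log_pow (n m : ℕ) :
    coeff n (log ℚ ^ m) = m ! / n ! * (descPochhammer ℚ n).coeff m := by
  induction n generalizing m with
  | zero =>
    rcases m with _ | m
    · simp
    · simp [coeff_zero_eq_constantCoeff, Polynomial.coeff_one]
  | succ n ih =>
    rcases m with _ | m
    · simp [coeff_one, Polynomial.coeff_zero_eq_eval_zero]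
    · have hrec := coeff_log_pow_succ_recurrence (A := ℚ) m n
      rw [ih, ih, Nat.factorial_succ] at hrec
      rw [coeff_descPochhammer_succ_succ, Nat.factorial_succ, Nat.factorial_succ]
      push_cast at hrec ⊢
      field_simp at hrec ⊢
      linear_combination hrec

theorem coeff_neg_log_pow (n m : ℕ) :
    coeff n ((-log A) ^ m) =
      algebraMap ℚ A ((-1) ^ m * (m ! / n ! * (descPochhammer ℚ n).coeff m)) := by
  rw [← map_log (algebraMap ℚ A), ← map_neg, ← map_pow, coeff_map, neg_pow,
    show (-1 : ℚ⟦X⟧) ^ m = C ((-1) ^ m) by simp, coeff_C_mul, coeff_log_pow]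

theorem HasSubst.neg_log : HasSubst (-PowerSeries.log A) :=
  HasSubst.of_constantCoeff_zero' (by simp)

theorem coeff_subst_neg_log (f : A⟦X⟧) (n : ℕ) :
    coeff n (f.subst (-log A)) = ∑ m ∈ range (n + 1),
      coeff m f * algebraMap ℚ A ((-1) ^ m * (m ! / n ! * (descPochhammer ℚ n).coeff m)) := by
  rw [coeff_subst' HasSubst.neg_log, finsum_eq_sum_of_support_subset (s := range (n + 1))]
  · simp only [smul_eq_mul, coeff_neg_log_pow]
  · refine Function.support_subset_iff'.mpr fun m hm => ?_
    rw [coeff_neg_log_pow, Polynomial.coeff_eq_zero_of_natDegree_lt (by simp_all)]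
    simp

theorem subst_neg_log_rescale_exp (y : A) :
    (rescale y (exp A)).subst (-log A) =
      mk fun n => algebraMap ℚ A ((-1) ^ n / n !) * Polynomial.aeval y (ascPochhammer ℚ n) := by
  ext n
  have hcoeff : algebraMap ℚ A ((-1) ^ n / n !) * Polynomial.aeval y (ascPochhammer ℚ n) =
      algebraMap ℚ A (n ! : ℚ)⁻¹ * Polynomial.aeval (-y) (descPochhammer ℚ n) := by
    rw [aeval_neg_descPochhammer, div_eq_mul_inv, map_mul]
    simp only [map_pow, map_neg, map_one]
    ring
  rw [coeff_subst_neg_log, coeff_mk, hcoeff, Polynomial.aeval_eq_sum_range,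
    descPochhammer_natDegree, mul_sum]
  refine sum_congr rfl fun m _ => ?_
  have hscalar : 1 / (m ! : ℚ) * ((-1) ^ m * (m ! / n ! * (descPochhammer ℚ n).coeff m)) =
      (n ! : ℚ)⁻¹ * ((descPochhammer ℚ n).coeff m * (-1) ^ m) := by
    field_simp
  rw [coeff_rescale, coeff_exp, mul_assoc, ← map_mul, hscalar, Algebra.smul_def, neg_pow]
  simp only [map_mul, map_pow, map_neg, map_one]
  ring

theorem subst_neg_log_exp_mul_one_add_X : (exp A).subst (-log A) * (1 + X) = 1 := by
  convert mk_neg_one_pow_mul_one_add_X A using 2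
  ext n
  rw [show exp A = rescale 1 (exp A) by simp, subst_neg_log_rescale_exp, coeff_mk, coeff_mk,
    Polynomial.aeval_def, Polynomial.eval₂_eq_eval_map, ascPochhammer_map,
    ascPochhammer_eval_one, div_eq_mul_inv, map_mul, mul_assoc, ← map_natCast (algebraMap ℚ A),
    ← map_mul, inv_mul_cancel₀ (by positivity), map_one, mul_one, map_pow, map_neg, map_one]

theorem subst_neg_log_inv_eq {E L : A⟦X⟧ˣ} (hE : (E : A⟦X⟧) * X = exp A - 1)
    (hL : (L : A⟦X⟧) * X = log A) :
    ((E⁻¹ : A⟦X⟧ˣ) : A⟦X⟧).subst (-log A) = (L : A⟦X⟧) * (1 + X) := by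
  have hprod : (E : A⟦X⟧).subst (-log A) * ((L : A⟦X⟧) * (1 + X)) = 1 := by
    have hsubst := congrArg (substAlgHom (R := A) (HasSubst.neg_log (A := A))) hE
    rw [map_mul, map_sub, map_one, coe_substAlgHom, subst_X HasSubst.neg_log] at hsubst
    apply mul_X_cancel
    linear_combination (-(1 + X)) * hsubst - subst_neg_log_exp_mul_one_add_X (A := A) +
      (E : A⟦X⟧).subst (-log A) * (1 + X) * hL
  calc ((E⁻¹ : A⟦X⟧ˣ) : A⟦X⟧).subst (-log A)
      = ((E⁻¹ : A⟦X⟧ˣ) : A⟦X⟧).subst (-log A) * (E : A⟦X⟧).subst (-log A) *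
          ((L : A⟦X⟧) * (1 + X)) := by rw [mul_assoc, hprod, mul_one]
    _ = (L : A⟦X⟧) * (1 + X) := by
      rw [← subst_mul HasSubst.neg_log, Units.inv_mul, ← coe_substAlgHom HasSubst.neg_log,
        map_one, one_mul]

theorem subst_neg_log_map_zpow_neg {E L : ℚ⟦X⟧ˣ} (hE : (E : ℚ⟦X⟧) * X = exp ℚ - 1)
    (hL : (L : ℚ⟦X⟧) * X = log ℚ) (s : ℕ) :
    (map (algebraMap ℚ A) ((E ^ (-(s : ℤ)) : ℚ⟦X⟧ˣ) : ℚ⟦X⟧)).subst (-log A) =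
      map (algebraMap ℚ A) ((L : ℚ⟦X⟧) * (1 + X)) ^ s := by
  let mapHom : ℚ⟦X⟧ →* A⟦X⟧ := (map (algebraMap ℚ A)).toMonoidHom
  have hE' : (Units.map mapHom E : A⟦X⟧) * X = exp A - 1 := by
    simpa [mapHom] using congrArg (map (algebraMap ℚ A)) hE
  have hL' : (Units.map mapHom L : A⟦X⟧) * X = log A := by
    simpa [mapHom] using congrArg (map (algebraMap ℚ A)) hL
  have hpow : map (algebraMap ℚ A) ((E ^ (-(s : ℤ)) : ℚ⟦X⟧ˣ) : ℚ⟦X⟧) =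
      (((Units.map mapHom E)⁻¹ : A⟦X⟧ˣ) : A⟦X⟧) ^ s := by
    simp [mapHom, zpow_neg]
  rw [hpow, subst_pow HasSubst.neg_log, subst_neg_log_inv_eq hE' hL']
  simp [mapHom]

theorem coeff_map_mul_subst_neg_log (α : ℕ → ℚ) (β : ℕ → A) (n : ℕ) :
    coeff n (map (algebraMap ℚ A) (mk fun l => α l / l !) *
        (mk fun m => (m ! : ℚ)⁻¹ • β m).subst (-log A)) =
      (n ! : ℚ)⁻¹ • ∑ m ∈ range (n + 1), ((-1) ^ m * ∑ l ∈ range (n - m + 1),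
        n.choose l * (descPochhammer ℚ (n - l)).coeff m * α l) • β m := by
  rw [coeff_mul, Nat.sum_antidiagonal_eq_sum_range_succ_mk, smul_sum]
  simp only [coeff_map, coeff_mk, coeff_subst_neg_log, mul_sum, sum_smul, smul_sum]
  rw [sum_comm' (t' := range (n + 1)) (s' := fun m => range (n - m + 1))
    (by intros; simp only [mem_range]; omega)]
  refine sum_congr rfl fun m _ => sum_congr rfl fun l hl => ?_
  set d := (descPochhammer ℚ (n - l)).coeff m
  have hscalar : α l / l ! * ((m ! : ℚ)⁻¹ * ((-1) ^ m * (m ! / (n - l) ! * d))) =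
      (n ! : ℚ)⁻¹ * ((-1) ^ m * (n.choose l * d * α l)) := by
    rw [Nat.cast_choose ℚ (by rw [mem_range] at hl; omega)]
    field_simp
  rw [smul_smul, Algebra.smul_def, Algebra.smul_def, ← hscalar]
  simp only [map_mul]
  ring

theorem subst_neg_log_rescale_X_exp :
    (rescale Polynomial.X (exp (Polynomial ℚ))).subst (-log (Polynomial ℚ)) =
      mk fun n => ((-1 : ℚ) ^ n / n !) • ascPochhammer ℚ n := by
  rw [subst_neg_log_rescale_exp]
  congr 1
  funext n
  rw [Polynomial.aeval_X_left_apply, Algebra.smul_def]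

theorem rescale_X_exp :
    rescale Polynomial.X (exp (Polynomial ℚ)) =
      mk fun n => (n ! : ℚ)⁻¹ • Polynomial.X ^ n := by
  ext n
  rw [coeff_rescale, coeff_exp, coeff_mk, Algebra.smul_def, one_div, mul_comm]

/-- The series `mk fun n => ((-1) ^ n / n!) • ascPochhammer ℚ n` is `(1 + t)^{-x}`; evaluate it
at `x = s` and clear `(1 + t)^{-s}`. -/
theorem eq_mk_eval_mul_one_add_X_pow {F : ℚ⟦X⟧} {a : ℕ → Polynomial ℚ}
    (h : map Polynomial.C F * mk (fun n => ((-1 : ℚ) ^ n / n !) • ascPochhammer ℚ n) =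
      mk fun n => (n ! : ℚ)⁻¹ • a n) (s : ℕ) :
    F = (mk fun l => (a l).eval (s : ℚ) / l !) * (1 + X) ^ s := by
  have hPs : map (Polynomial.evalRingHom (s : ℚ))
      (mk fun n => ((-1 : ℚ) ^ n / n !) • ascPochhammer ℚ n) =
        (exp ℚ).subst (-log ℚ) ^ s := by
    rw [← subst_pow HasSubst.neg_log, exp_pow_eq_rescale_exp, subst_neg_log_rescale_exp]
    ext n
    simp
  have heval := congrArg (map (Polynomial.evalRingHom (s : ℚ))) h
  rw [map_mul, map_evalRingHom_map_C, hPs] at heval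
  calc F = F * ((exp ℚ).subst (-log ℚ) ^ s * (1 + X) ^ s) := by
        rw [← mul_pow, subst_neg_log_exp_mul_one_add_X, one_pow, mul_one]
    _ = _ := by
        rw [← mul_assoc, heval]
        congr 1
        ext n
        simp [div_eq_inv_mul]

end PowerSeries

open PowerSeries

theorem cauchy_stmt10_general
    (r k : ℤ) (s : ℕ)
    (L : PowerSeries ℚ)
    (hL : ∀ n : ℕ, PowerSeries.coeff n L = if n = 0 then 0 else (-1 : ℚ) ^ (n - 1) / n)
    (Lu : (PowerSeries ℚ)ˣ)
    (hLu : (Lu : PowerSeries ℚ) * PowerSeries.X = L)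
    (G : ℤ → PowerSeries ℚ)
    (A : ℤ → ℤ → ℕ → Polynomial ℚ)
    (hA : ∀ ρ κ : ℤ, PowerSeries.map (Polynomial.C : ℚ →+* Polynomial ℚ)
        (((Lu ^ (-ρ) : (PowerSeries ℚ)ˣ) : PowerSeries ℚ) * G κ) *
        PowerSeries.mk (fun n => ((-1 : ℚ) ^ n / n.factorial) • ascPochhammer ℚ n) =
      PowerSeries.mk (fun n => ((n.factorial : ℚ)⁻¹) • A ρ κ n))
    (S1 : ℕ → ℕ → ℚ)
    (hS1 : ∀ n : ℕ, descPochhammer ℚ n =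
      ∑ l ∈ Finset.range (n + 1), Polynomial.C (S1 n l) * Polynomial.X ^ l)
    (Eu : (PowerSeries ℚ)ˣ)
    (hEu : (Eu : PowerSeries ℚ) * PowerSeries.X = PowerSeries.exp ℚ - 1)
    (B : ℤ → ℕ → Polynomial ℚ)
    (hB : ∀ α : ℤ, PowerSeries.map (Polynomial.C : ℚ →+* Polynomial ℚ)
        ((Eu ^ (-α) : (PowerSeries ℚ)ˣ) : PowerSeries ℚ) *
        PowerSeries.mk (fun n => ((n.factorial : ℚ)⁻¹) • (Polynomial.X : Polynomial ℚ) ^ n) =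
      PowerSeries.mk (fun n => ((n.factorial : ℚ)⁻¹) • B α n))
    :
    ∀ n : ℕ, A r k n = ∑ m ∈ Finset.range (n + 1),
      ((-1 : ℚ) ^ m * ∑ l ∈ Finset.range (n - m + 1),
        (n.choose l : ℚ) * S1 (n - l) m * (A ((r : ℤ) + s) k l).eval (s : ℚ)) •
          B (s : ℤ) m := by
  obtain rfl : L = log ℚ := by
    ext n
    rw [hL, coeff_log]
    rcases n with _ | n <;> simp [pow_succ]
  have hBs : (mk fun m => (m ! : ℚ)⁻¹ • B s m).subst (-log (Polynomial ℚ)) =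
      map Polynomial.C ((Lu : ℚ⟦X⟧) * (1 + X)) ^ s *
        mk fun n => ((-1 : ℚ) ^ n / n !) • ascPochhammer ℚ n := by
    rw [← hB, ← rescale_X_exp, subst_mul HasSubst.neg_log, subst_neg_log_rescale_X_exp,
      ← Polynomial.algebraMap_eq, subst_neg_log_map_zpow_neg hEu hLu]
  have hLu_zpow : ((Lu ^ (-r) : ℚ⟦X⟧ˣ) : ℚ⟦X⟧) =
      ((Lu ^ (-(r + s)) : ℚ⟦X⟧ˣ) : ℚ⟦X⟧) * (Lu : ℚ⟦X⟧) ^ s := by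
    rw [← Units.val_pow_eq_pow_val, ← Units.val_mul, ← zpow_natCast, ← zpow_add, neg_add,
      neg_add_cancel_right]
  have key : mk (fun n => (n ! : ℚ)⁻¹ • A r k n) =
      map (algebraMap ℚ (Polynomial ℚ)) (mk fun l => (A (r + s) k l).eval (s : ℚ) / l !) *
        (mk fun m => (m ! : ℚ)⁻¹ • B s m).subst (-log (Polynomial ℚ)) := by
    rw [← hA r k, hBs, ← mul_assoc, Polynomial.algebraMap_eq, ← map_pow, ← map_mul,
      hLu_zpow, mul_right_comm, eq_mk_eval_mul_one_add_X_pow (hA (r + s) k) s, mul_assoc,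
      ← mul_pow, mul_comm (1 + X)]
  have hS1_coeff : ∀ j m, m ≤ j → (descPochhammer ℚ j).coeff m = S1 j m := by
    intro j m hm
    rw [hS1 j, Polynomial.finsetSum_coeff]
    simp [Nat.lt_succ_of_le hm]
  intro n
  have hcoeff := congrArg (coeff n) key
  rw [coeff_mk, coeff_map_mul_subst_neg_log] at hcoeff
  refine smul_right_injective (Polynomial ℚ)
    (inv_ne_zero (Nat.cast_ne_zero.mpr n.factorial_ne_zero)) (hcoeff.trans ?_)
  refine congrArg _ (Finset.sum_congr rfl fun m hm => ?_)
  refine congrArg (fun c => ((-1) ^ m * c) • B s m) (Finset.sum_congr rfl fun l hl => ?_)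
  rw [hS1_coeff _ _ (by rw [Finset.mem_range] at hm hl; omega)]

/-- for all `n ≥ 0`, `s ≥ 0` and integers `r, k`,
`Aₙ^{(r,k)}(x) = Σ_{m=0}^n [(-1)^m Σ_{l=0}^{n-m} C(n,l) S₁(n-l,m) A_l^{(r+s,k)}(s)]
 B_m^{(s)}(x)`, where `B_m^{(s)}` is the Bernoulli polynomial of order `s`. -/
theorem cauchy_stmt10
    (r k : ℤ) (s : ℕ)
    (L : PowerSeries ℚ)
    (hL : ∀ n : ℕ, PowerSeries.coeff n L = if n = 0 then 0 else (-1 : ℚ) ^ (n - 1) / n)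
    (Lu : (PowerSeries ℚ)ˣ)
    (hLu : (Lu : PowerSeries ℚ) * PowerSeries.X = L)
    (G : ℤ → PowerSeries ℚ)
    (hG : ∀ (j : ℤ) (n : ℕ), PowerSeries.coeff n (G j) =
      ∑ m ∈ Finset.range (n + 1),
        ((m.factorial : ℚ) * ((m : ℚ) + 1) ^ j)⁻¹ * PowerSeries.coeff n (L ^ m))
    (A : ℤ → ℤ → ℕ → Polynomial ℚ)
    (hA : ∀ ρ κ : ℤ, PowerSeries.map (Polynomial.C : ℚ →+* Polynomial ℚ)
        (((Lu ^ (-ρ) : (PowerSeries ℚ)ˣ) : PowerSeries ℚ) * G κ) *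
        PowerSeries.mk (fun n => ((-1 : ℚ) ^ n / n.factorial) • ascPochhammer ℚ n) =
      PowerSeries.mk (fun n => ((n.factorial : ℚ)⁻¹) • A ρ κ n))
    (S1 : ℕ → ℕ → ℚ)
    (hS1 : ∀ n : ℕ, descPochhammer ℚ n =
      ∑ l ∈ Finset.range (n + 1), Polynomial.C (S1 n l) * Polynomial.X ^ l)
    (hS1zero : ∀ n l : ℕ, n < l → S1 n l = 0)
    (Eu : (PowerSeries ℚ)ˣ)
    (hEu : (Eu : PowerSeries ℚ) * PowerSeries.X = PowerSeries.exp ℚ - 1)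
    (B : ℤ → ℕ → Polynomial ℚ)
    (hB : ∀ α : ℤ, PowerSeries.map (Polynomial.C : ℚ →+* Polynomial ℚ)
        ((Eu ^ (-α) : (PowerSeries ℚ)ˣ) : PowerSeries ℚ) *
        PowerSeries.mk (fun n => ((n.factorial : ℚ)⁻¹) • (Polynomial.X : Polynomial ℚ) ^ n) =
      PowerSeries.mk (fun n => ((n.factorial : ℚ)⁻¹) • B α n))
    :
    ∀ n : ℕ, A r k n = ∑ m ∈ Finset.range (n + 1),
      ((-1 : ℚ) ^ m * ∑ l ∈ Finset.range (n - m + 1),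
        (n.choose l : ℚ) * S1 (n - l) m * (A ((r : ℤ) + s) k l).eval (s : ℚ)) •
          B (s : ℤ) m :=
  cauchy_stmt10_general r k s L hL Lu hLu G A hA S1 hS1 Eu hEu B hB
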